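/- arXiv:1808.04872 — 2 statements merged into one kernel-verified Lean document; each statement's English description precedes it below -/
import Mathlib

section
/- Let H be a Hilbert space, T a compact self-adjoint operator on H with eigenvalues {μ_l} and orthonormal eigenbasis {ψ_l}, and suppose u is a unit vector with T̃ u = μ̃ u for another compact self-adjoint operator T̃ on H. Fix j with α_j := min_{l ≠ j} |μ_l − μ_j| > 0 and set u' = sgn⟨u, ψⱼ⟩ ψⱼ. If |μ̃ − μ_j| ≤ ‖T − T̃‖, then ‖u − u'‖ ≤ (2√2 / α_j) · ‖T − T̃‖_{L(H)}. -/
open scoped RealInnerProductSpace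

/-- `sgn t = 1` if `t ≥ 0` and `−1` otherwise. -/
noncomputable def sgn (t : ℝ) : ℝ := if 0 ≤ t then 1 else -1

set_option maxHeartbeats 1000000 in
/-- eigenvector perturbation bound: if `T`, `T̃` are compact self-adjoint,
`{ψ_l}` is an orthonormal eigenbasis of `T` with eigenvalues `μ_l`, `u` a unit eigenvector of
`T̃` with eigenvalue `μ̃`, `α_j > 0` is a lower bound on the spectral gap
`min_{l ≠ j} |μ_l − μ_j|`, and `|μ̃ − μ_j| ≤ ‖T − T̃‖`, then
`‖u − sgn⟪u, ψ_j⟫ ψ_j‖ ≤ (2√2 / α_j) ‖T − T̃‖`. -/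
theorem eigenvector_perturbation
    {H : Type*} [NormedAddCommGroup H] [InnerProductSpace ℝ H] [CompleteSpace H]
    (T Tt : H →L[ℝ] H)
    (hTc : IsCompactOperator T) (hTtc : IsCompactOperator Tt)
    (hTsa : IsSelfAdjoint T) (hTtsa : IsSelfAdjoint Tt)
    (b : HilbertBasis ℕ ℝ H) (μ : ℕ → ℝ)
    (heig : ∀ l, T (b l) = μ l • b l)
    (u : H) (hu : ‖u‖ = 1) (μt : ℝ) (hut : Tt u = μt • u)
    (j : ℕ) (αj : ℝ) (hαj : 0 < αj) (hgap : ∀ l, l ≠ j → αj ≤ |μ l - μ j|)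
    (hμ : |μt - μ j| ≤ ‖T - Tt‖) :
    ‖u - sgn ⟪u, b j⟫ • b j‖ ≤ (2 * Real.sqrt 2 / αj) * ‖T - Tt‖ := by
  set ε := ‖T - Tt‖ with hε
  have hε0 : 0 ≤ ε := norm_nonneg _
  set v := T u - μ j • u with hv
  -- bound on ‖v‖
  have hveq : v = (T - Tt) u + (μt - μ j) • u := by
    simp [hv, ContinuousLinearMap.sub_apply, hut, sub_smul]
  have hvle : ‖v‖ ≤ 2 * ε := by
    rw [hveq]
    calc ‖(T - Tt) u + (μt - μ j) • u‖ ≤ ‖(T - Tt) u‖ + ‖(μt - μ j) • u‖ := norm_add_le _ _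
      _ ≤ ε + ε := by
          gcongr
          · calc ‖(T - Tt) u‖ ≤ ‖T - Tt‖ * ‖u‖ := (T - Tt).le_opNorm u
              _ = ε := by rw [hu, mul_one]
          · rw [norm_smul, hu, mul_one, Real.norm_eq_abs]; exact hμ
      _ = 2 * ε := by ring
  -- inner products of v with basis
  have hsym := hTsa.isSymmetric
  have hvin : ∀ l, ⟪v, b l⟫ = (μ l - μ j) * ⟪u, b l⟫ := by
    intro l
    have h := hsym u (b l)
    simp only [ContinuousLinearMap.coe_coe] at h
    rw [hv, inner_sub_left, real_inner_smul_left, h, heig l, real_inner_smul_right]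
    ring
  -- Parseval for u
  have hcs : Summable (fun l => ⟪u, b l⟫ ^ 2) := by
    have := b.summable_inner_mul_inner u u
    simpa [real_inner_comm, sq] using this
  have hpar : ∑' l, ⟪u, b l⟫ ^ 2 = 1 := by
    have := b.tsum_inner_mul_inner u u
    rw [real_inner_self_eq_norm_sq, hu] at this
    simpa [real_inner_comm, sq] using this
  -- Parseval for v
  have hvs : Summable (fun l => ⟪v, b l⟫ ^ 2) := by
    have := b.summable_inner_mul_inner v v
    simpa [real_inner_comm, sq] using this
  have hvpar : ∑' l, ⟪v, b l⟫ ^ 2 = ‖v‖ ^ 2 := by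
    have := b.tsum_inner_mul_inner v v
    rw [real_inner_self_eq_norm_sq] at this
    simpa [real_inner_comm, sq] using this
  -- tail sum
  set S := ∑' l, (if l = j then 0 else ⟪u, b l⟫ ^ 2) with hS
  have hSsum : Summable (fun l => if l = j then 0 else ⟪u, b l⟫ ^ 2) :=
    hcs.of_nonneg_of_le (fun l => by split; exacts [le_rfl, sq_nonneg _])
      (fun l => by split; exacts [sq_nonneg _, le_rfl])
  have hS0 : 0 ≤ S := tsum_nonneg (fun l => by split <;> positivity)
  have hSeq : ⟪u, b j⟫ ^ 2 + S = 1 := by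
    rw [hS, ← Summable.tsum_eq_add_tsum_ite hcs j, hpar]
  -- αj² S ≤ ‖v‖²
  have hkey : αj ^ 2 * S ≤ (2 * ε) ^ 2 := by
    have h1 : αj ^ 2 * S ≤ ∑' l, ⟪v, b l⟫ ^ 2 := by
      rw [hS, ← tsum_mul_left]
      apply Summable.tsum_le_tsum _ (hSsum.mul_left _) hvs
      intro l
      by_cases hl : l = j
      · simp only [hl, if_pos rfl, eq_self_iff_true, if_true, mul_zero]
        exact sq_nonneg _
      · simp only [hl, if_neg, if_false]
        rw [hvin l, mul_pow]
        have hle : αj ^ 2 ≤ (μ l - μ j) ^ 2 := by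
          rw [← sq_abs (μ l - μ j)]
          have h := hgap l hl
          nlinarith [hαj.le, abs_nonneg (μ l - μ j)]
        exact mul_le_mul_of_nonneg_right hle (sq_nonneg _)
    calc αj ^ 2 * S ≤ ∑' l, ⟪v, b l⟫ ^ 2 := h1
      _ = ‖v‖ ^ 2 := hvpar
      _ ≤ (2 * ε) ^ 2 := by nlinarith [norm_nonneg v, hvle, hε0]
  have hSle : S ≤ 4 * ε ^ 2 / αj ^ 2 := by
    rw [le_div_iff₀ (by positivity)]
    nlinarith [hkey]
  -- |⟪u, b j⟫| ≤ 1
  have hcj1 : ⟪u, b j⟫ ^ 2 ≤ 1 := by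
    have := Summable.le_tsum hcs j (fun l _ => by positivity)
    linarith [hpar ▸ this]
  have hcjabs : |⟪u, b j⟫| ≤ 1 := by
    nlinarith [abs_nonneg ⟪u, b j⟫, sq_abs ⟪u, b j⟫]
  -- norm squared of u - s b j
  set s := sgn ⟪u, b j⟫ with hs
  have hs2 : s ^ 2 = 1 := by
    rw [hs, sgn]; split <;> norm_num
  have hscj : s * ⟪u, b j⟫ = |⟪u, b j⟫| := by
    rw [hs, sgn]; split
    · rw [abs_of_nonneg ‹_›]; ring
    · rw [abs_of_neg (lt_of_not_ge ‹_›)]; ring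
  have hnormsq : ‖u - s • b j‖ ^ 2 = 2 - 2 * |⟪u, b j⟫| := by
    rw [norm_sub_sq_real, real_inner_smul_right, norm_smul, hu]
    have hbj : ‖b j‖ = 1 := b.orthonormal.1 j
    rw [hbj, hscj, Real.norm_eq_abs, mul_one, one_pow]
    have h : |s| ^ 2 = 1 := by rw [sq_abs]; exact hs2
    nlinarith [h]
  have h2 : (2 * Real.sqrt 2 / αj * ε) ^ 2 = 8 * ε ^ 2 / αj ^ 2 := by
    rw [mul_pow, div_pow, mul_pow, Real.sq_sqrt (by norm_num : (0:ℝ) ≤ 2)]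
    ring
  have hfinal2 : ‖u - s • b j‖ ^ 2 ≤ (2 * Real.sqrt 2 / αj * ε) ^ 2 := by
    have hccc : ⟪u, b j⟫ ^ 2 ≤ |⟪u, b j⟫| := by
      rw [sq, ← abs_mul_abs_self]
      calc |⟪u, b j⟫| * |⟪u, b j⟫| ≤ 1 * |⟪u, b j⟫| :=
            mul_le_mul_of_nonneg_right hcjabs (abs_nonneg _)
        _ = |⟪u, b j⟫| := one_mul _
    have h1 : 2 - 2 * |⟪u, b j⟫| ≤ 2 * S := by linarith [hSeq, hccc]
    rw [hnormsq, h2]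
    calc 2 - 2 * |⟪u, b j⟫| ≤ 2 * S := h1
      _ ≤ 2 * (4 * ε ^ 2 / αj ^ 2) := by linarith
      _ = 8 * ε ^ 2 / αj ^ 2 := by ring
  have hrhs0 : 0 ≤ 2 * Real.sqrt 2 / αj * ε := by positivity
  calc ‖u - s • b j‖ = √(‖u - s • b j‖ ^ 2) := by
        rw [Real.sqrt_sq (norm_nonneg _)]
    _ ≤ √((2 * Real.sqrt 2 / αj * ε) ^ 2) := Real.sqrt_le_sqrt hfinal2
    _ = 2 * Real.sqrt 2 / αj * ε := Real.sqrt_sq hrhs0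
end

section
/- Let H be a Hilbert space, ρ : H → H a bounded linear operator, and for each n let {φ_{n,j}}_{j=1}^{k_n} be an orthonormal family and {φ'_{n,j}}_{j=1}^{k_n} be ±1 multiples of elements of a fixed orthonormal basis {φ_j} (φ'_{n,j} = sgn⟨φ_j, φ_{n,j}⟩ φ_j). Then for every x ∈ H with ‖x‖ ≤ 1, ‖ρ(x) − Σ_{j=1}^{k_n} ⟨ρ(x), φ_{n,j}⟩ φ_{n,j}‖ ≤ 2 ‖ρ‖_{L(H)} Σ_{j=1}^{k_n} ‖φ_{n,j} − φ'_{n,j}‖ + ‖Σ_{j > k_n} ⟨ρ(x), φ'_{n,j}⟩ φ'_{n,j}‖, where {φ'_{n,j}}_{j>k_n} completes the basis. -/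
open scoped RealInnerProductSpace

lemma sgn_mul_self (t : ℝ) : sgn t * sgn t = 1 := by
  unfold sgn; split_ifs <;> norm_num

lemma abs_sgn (t : ℝ) : |sgn t| = 1 := by
  unfold sgn; split_ifs <;> norm_num

/-- key estimate in Lemma 1: with `{φ_j}` an orthonormal basis (`b`),
`{φ_{n,j}}_{j<k}` an orthonormal family (`φ`), and `φ'_j = sgn⟪φ_j, φ_{n,j}⟫ φ_j`,
for every `x` with `‖x‖ ≤ 1`,
`‖ρ x − ∑_{j<k} ⟪ρ x, φ_{n,j}⟫ φ_{n,j}‖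
  ≤ 2‖ρ‖ ∑_{j<k} ‖φ_{n,j} − φ'_j‖ + ‖∑_{j≥k} ⟪ρ x, φ'_j⟫ φ'_j‖`. -/
theorem key_estimate_lemma1
    {H : Type*} [NormedAddCommGroup H] [InnerProductSpace ℝ H] [CompleteSpace H]
    (b : HilbertBasis ℕ ℝ H) (ρ : H →L[ℝ] H) (k : ℕ) (φ : ℕ → H)
    (hφ : Orthonormal ℝ (fun j : Fin k => φ (j : ℕ))) :
    ∀ x : H, ‖x‖ ≤ 1 →
      ‖ρ x - ∑ j ∈ Finset.range k, ⟪ρ x, φ j⟫ • φ j‖ ≤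
        2 * ‖ρ‖ * ∑ j ∈ Finset.range k, ‖φ j - sgn ⟪b j, φ j⟫ • b j‖ +
          ‖∑' l : {l : ℕ // k ≤ l},
              ⟪ρ x, sgn ⟪b (l : ℕ), φ (l : ℕ)⟫ • b (l : ℕ)⟫ • (sgn ⟪b (l : ℕ), φ (l : ℕ)⟫ • b (l : ℕ))‖ := by
  intro x hx
  set f : ℕ → H := fun j => ⟪ρ x, b j⟫ • b j with hfdef
  set g : ℕ → H := fun j => ⟪ρ x, φ j⟫ • φ j with hgdef
  have hρx : ‖ρ x‖ ≤ ‖ρ‖ := by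
    calc ‖ρ x‖ ≤ ‖ρ‖ * ‖x‖ := ρ.le_opNorm x
    _ ≤ ‖ρ‖ * 1 := by gcongr
    _ = ‖ρ‖ := mul_one _
  -- the sgn-square simplification
  have hterm : ∀ l : ℕ, ⟪ρ x, sgn ⟪b l, φ l⟫ • b l⟫ • (sgn ⟪b l, φ l⟫ • b l) = f l := by
    intro l
    rw [real_inner_smul_right, smul_smul, hfdef]
    congr 1
    have h := sgn_mul_self ⟪b l, φ l⟫
    linear_combination ⟪ρ x, b l⟫ * h
  have hsum : HasSum f (ρ x) := by
    have h := b.hasSum_repr (ρ x)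
    refine h.congr_fun fun j => ?_
    rw [hfdef, b.repr_apply_apply, real_inner_comm]
  have hsplit := Summable.sum_add_tsum_compl (s := Finset.range k) hsum.summable
  rw [hsum.tsum_eq] at hsplit
  have hT : (∑' l : {l : ℕ // k ≤ l},
        ⟪ρ x, sgn ⟪b (l : ℕ), φ (l : ℕ)⟫ • b (l : ℕ)⟫ • (sgn ⟪b (l : ℕ), φ (l : ℕ)⟫ • b (l : ℕ)))
      = ∑' l : ((Finset.range k : Set ℕ)ᶜ : Set ℕ), f l := by
    rw [← (Equiv.subtypeEquivRight (p := fun l : ℕ => k ≤ l)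
      (q := fun l : ℕ => l ∈ ((Finset.range k : Set ℕ)ᶜ : Set ℕ))
      (fun l => by simp)).tsum_eq (fun l : ((Finset.range k : Set ℕ)ᶜ : Set ℕ) => f (l : ℕ))]
    exact tsum_congr fun l => hterm l
  have hdecomp : ρ x - ∑ j ∈ Finset.range k, g j =
      (∑ j ∈ Finset.range k, (f j - g j)) +
      ∑' l : {l : ℕ // k ≤ l},
        ⟪ρ x, sgn ⟪b (l : ℕ), φ (l : ℕ)⟫ • b (l : ℕ)⟫ • (sgn ⟪b (l : ℕ), φ (l : ℕ)⟫ • b (l : ℕ)) := by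
    rw [hT, Finset.sum_sub_distrib, ← hsplit]; abel
  rw [show (∑ j ∈ Finset.range k, ⟪ρ x, φ j⟫ • φ j) = ∑ j ∈ Finset.range k, g j from rfl, hdecomp]
  refine le_trans (norm_add_le _ _) ?_
  gcongr
  refine le_trans (norm_sum_le _ _) ?_
  rw [Finset.mul_sum]
  refine Finset.sum_le_sum fun j hj => ?_
  -- termwise bound
  have hjk : j < k := Finset.mem_range.mp hj
  have hφj : ‖φ j‖ = 1 := hφ.1 ⟨j, hjk⟩
  set s : ℝ := sgn ⟪b j, φ j⟫ with hs
  set ψ : H := s • b j with hψ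
  have hψnorm : ‖ψ‖ = 1 := by
    rw [hψ, norm_smul, Real.norm_eq_abs, abs_sgn, one_mul, b.orthonormal.1 j]
  have hfj : f j = ⟪ρ x, ψ⟫ • ψ := (hterm j).symm
  have hexp : f j - g j = ⟪ρ x, ψ - φ j⟫ • ψ + ⟪ρ x, φ j⟫ • (ψ - φ j) := by
    rw [hfj, hgdef, inner_sub_right]
    simp only [sub_smul, smul_sub]
    abel
  rw [hexp]
  have h1 : ‖⟪ρ x, ψ - φ j⟫ • ψ‖ ≤ ‖ρ‖ * ‖φ j - ψ‖ := by
    rw [norm_smul, hψnorm, mul_one, Real.norm_eq_abs]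
    calc |⟪ρ x, ψ - φ j⟫| ≤ ‖ρ x‖ * ‖ψ - φ j‖ := abs_real_inner_le_norm _ _
    _ ≤ ‖ρ‖ * ‖φ j - ψ‖ := by rw [norm_sub_rev]; gcongr
  have h2 : ‖⟪ρ x, φ j⟫ • (ψ - φ j)‖ ≤ ‖ρ‖ * ‖φ j - ψ‖ := by
    rw [norm_smul, Real.norm_eq_abs, norm_sub_rev]
    have : |⟪ρ x, φ j⟫| ≤ ‖ρ‖ := by
      calc |⟪ρ x, φ j⟫| ≤ ‖ρ x‖ * ‖φ j‖ := abs_real_inner_le_norm _ _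
      _ ≤ ‖ρ‖ := by rw [hφj, mul_one]; exact hρx
    exact mul_le_mul_of_nonneg_right this (norm_nonneg _)
  calc ‖⟪ρ x, ψ - φ j⟫ • ψ + ⟪ρ x, φ j⟫ • (ψ - φ j)‖
      ≤ ‖⟪ρ x, ψ - φ j⟫ • ψ‖ + ‖⟪ρ x, φ j⟫ • (ψ - φ j)‖ := norm_add_le _ _
    _ ≤ ‖ρ‖ * ‖φ j - ψ‖ + ‖ρ‖ * ‖φ j - ψ‖ := add_le_add h1 h2
    _ = 2 * ‖ρ‖ * ‖φ j - ψ‖ := by ring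
end
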